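/- arXiv:2407.05561 — 5 statements merged into one kernel-verified Lean document; each statement's English description precedes it below -/
import Mathlib

section
/- For every nonzero y ∈ G_m, writing k = m − v_p(ȳ) (so k ∈ {1,…,m}), the characteristic function of w satisfies Σ_{x ∈ G_m} w(x)·e(x,y) = (p^{mb}/(p^{mb} − 1))·(1 − β·p^{(k−m)b}); and for y = 0, Σ_{x ∈ G_m} w(x)·e(x,0) = 1. -/
open scoped BigOperators

/-- β = (p^{b+1} − 1)/(p^b (p − 1)) -/
noncomputable def betaC (p : ℕ) (b : ℝ) : ℝ :=
  ((p : ℝ) ^ (b + 1) - 1) / ((p : ℝ) ^ b * ((p : ℝ) - 1))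

/-- c_m = (p^b − 1)·p^{mb}/(p^{mb} − 1) -/
noncomputable def cC (p : ℕ) (b : ℝ) (m : ℕ) : ℝ :=
  ((p : ℝ) ^ b - 1) * (p : ℝ) ^ ((m : ℝ) * b) / ((p : ℝ) ^ ((m : ℝ) * b) - 1)

/-- The single-step law `w` on `G_m = ZMod (p^m)`. -/
noncomputable def wfun (p : ℕ) (b : ℝ) (m : ℕ) (x : ZMod (p ^ m)) : ℝ :=
  if x = 0 then 0 else
    cC p b m * (p : ℝ) ^ (-((m - padicValNat p x.val : ℕ) : ℝ) * b) /
      (((p : ℝ) - 1) * (p : ℝ) ^ ((m - padicValNat p x.val : ℕ) - 1))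

/-- The standard additive character pairing on `ZMod (p^m)`. -/
noncomputable def epair (p m : ℕ) (x y : ZMod (p ^ m)) : ℂ :=
  Complex.exp (2 * Real.pi * Complex.I * (x.val : ℂ) * (y.val : ℂ) / ((p : ℂ) ^ m))

/-!
`w` is constant on each shell `v_p(x̄) = m - 1 - i`, and that shell is the difference of the
subgroups `p^{m-1-i} G_m ⊇ p^{m-i} G_m`. Summing `e(·, y)` over `p^j G_m` gives `p^{m-j}` if
`p^{m-j} ∣ ȳ` and `0` otherwise, so only the shells with `i ≤ v_p(ȳ)` survive: they form a
geometric series in `p^{-b}`, together with a single negative boundary term at `i = v_p(ȳ)`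
(absent when `y = 0`). The normalisation `c_m` makes the full series sum to `1`.
-/

open Finset Complex

lemma sum_range_exp_mul_div (M a : ℕ) (hM : M ≠ 0) :
    ∑ t ∈ range M, exp (2 * Real.pi * I * t * a / M) = if M ∣ a then (M : ℂ) else 0 := by
  have hζ := isPrimitiveRoot_exp M hM
  have hpow (t : ℕ) :
      exp (2 * Real.pi * I * t * a / M) = (exp (2 * Real.pi * I / M) ^ a) ^ t := by
    rw [← pow_mul, ← exp_nat_mul]
    push_cast
    ring_nf
  simp_rw [hpow]
  split_ifs with hdvd
  · simp [(hζ.pow_eq_one_iff_dvd a).mpr hdvd]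
  · have hne : exp (2 * Real.pi * I / M) ^ a ≠ 1 := mt (hζ.pow_eq_one_iff_dvd a).mp hdvd
    rw [geom_sum_eq hne, ← pow_mul, mul_comm a M, pow_mul, hζ.pow_eq_one, one_pow, sub_self,
      zero_div]

lemma sum_filter_pow_dvd_val_epair {p : ℕ} [NeZero p] {j k m : ℕ} (hjkm : j + k = m)
    (y : ZMod (p ^ m)) :
    ∑ x ∈ univ.filter (fun x : ZMod (p ^ m) => p ^ j ∣ x.val), epair p m x y =
      if p ^ k ∣ y.val then (p : ℂ) ^ k else 0 := by
  subst hjkm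
  have hp : (p : ℂ) ≠ 0 := NeZero.ne _
  have hpj : 0 < p ^ j := pow_pos (Nat.pos_of_neZero p) j
  have hval : ∀ t < p ^ k, ((p ^ j * t : ℕ) : ZMod (p ^ (j + k))).val = p ^ j * t := fun t ht =>
    ZMod.val_cast_of_lt (by rw [pow_add]; exact Nat.mul_lt_mul_of_pos_left ht hpj)
  rw [← Nat.cast_pow, ← sum_range_exp_mul_div _ _ (NeZero.ne _)]
  refine sum_nbij' (fun x => x.val / p ^ j) (fun t => ((p ^ j * t : ℕ) : ZMod (p ^ (j + k))))
    ?_ ?_ ?_ ?_ ?_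
  · intro x _
    simpa [Nat.div_lt_iff_lt_mul hpj, mul_comm, ← pow_add] using ZMod.val_lt x
  · intro t ht
    rw [mem_filter, hval t (mem_range.mp ht)]
    exact ⟨mem_univ _, dvd_mul_right _ _⟩
  · intro x hx
    simp [Nat.mul_div_cancel' (mem_filter.mp hx).2]
  · intro t ht
    rw [hval t (mem_range.mp ht), Nat.mul_div_cancel_left t hpj]
  · intro x hx
    obtain ⟨c, hc⟩ := (mem_filter.mp hx).2
    simp only [epair, hc, Nat.mul_div_cancel_left c hpj]
    congr 1
    push_cast
    field_simp
    ring

lemma padicValNat_val_lt {p m : ℕ} [Fact p.Prime] {x : ZMod (p ^ m)} (hx : x ≠ 0) :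
    padicValNat p x.val < m := by
  have hval : x.val ≠ 0 := (ZMod.val_ne_zero x).mpr hx
  rw [← not_le, ← padicValNat_dvd_iff_le hval]
  exact fun h => hval (Nat.eq_zero_of_dvd_of_lt h x.val_lt)

lemma rpow_natCast_mul_eq_pow {x : ℝ} (hx : 0 ≤ x) (n : ℕ) (b : ℝ) :
    x ^ ((n : ℝ) * b) = (x ^ b) ^ n := by
  rw [mul_comm, Real.rpow_mul_natCast hx]

lemma rpow_neg_natCast_mul {x : ℝ} (hx : 0 ≤ x) (n : ℕ) (b : ℝ) :
    x ^ (-(n : ℝ) * b) = (x ^ b)⁻¹ ^ n := by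
  rw [neg_mul, Real.rpow_neg hx, mul_comm, Real.rpow_mul_natCast hx, inv_pow]

/-- The value of `w` on the shell `v_p(x̄) = m - 1 - i`. -/
noncomputable def shellWeight (p : ℕ) (b : ℝ) (m i : ℕ) : ℝ :=
  cC p b m * ((p : ℝ) ^ b)⁻¹ ^ (i + 1) / (((p : ℝ) - 1) * (p : ℝ) ^ i)

lemma wfun_eq_sum_shellWeight (p : ℕ) [Fact p.Prime] (b : ℝ) (m : ℕ) (x : ZMod (p ^ m)) :
    wfun p b m x = ∑ i ∈ range m, shellWeight p b m i *
      ((if p ^ (m - 1 - i) ∣ x.val then 1 else 0) -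
        (if p ^ (m - i) ∣ x.val then 1 else 0)) := by
  by_cases hx : x = 0
  · simp [hx, wfun]
  have hval : x.val ≠ 0 := (ZMod.val_ne_zero x).mpr hx
  have hdvd (n : ℕ) : p ^ n ∣ x.val ↔ n ≤ padicValNat p x.val := padicValNat_dvd_iff_le hval
  have hv := padicValNat_val_lt hx
  rw [wfun, if_neg hx]
  generalize padicValNat p x.val = v at hdvd hv ⊢
  have hterm : ∀ i ∈ range m, shellWeight p b m i *
      ((if p ^ (m - 1 - i) ∣ x.val then 1 else 0) - (if p ^ (m - i) ∣ x.val then 1 else 0)) =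
      if m - 1 - v = i then shellWeight p b m i else 0 := by
    intro i hi
    simp only [hdvd]
    rw [mem_range] at hi
    split_ifs <;> first | omega | ring
  rw [sum_congr rfl hterm, sum_ite_eq, if_pos (mem_range.mpr (by omega)), shellWeight,
    rpow_neg_natCast_mul (Nat.cast_nonneg p), show m - v = m - 1 - v + 1 by omega,
    Nat.add_sub_cancel]

lemma sum_wfun_mul_epair (p : ℕ) [Fact p.Prime] (b : ℝ) (m : ℕ) (y : ZMod (p ^ m)) :
    ∑ x : ZMod (p ^ m), (wfun p b m x : ℂ) * epair p m x y =
      ((∑ i ∈ range m,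
        ((if p ^ (i + 1) ∣ y.val then shellWeight p b m i * (p : ℝ) ^ (i + 1) else 0) -
          (if p ^ i ∣ y.val then shellWeight p b m i * (p : ℝ) ^ i else 0)) : ℝ) : ℂ) := by
  have hshell (i : ℕ) (hi : i ∈ range m) :
      ∑ x : ZMod (p ^ m), ((shellWeight p b m i *
        ((if p ^ (m - 1 - i) ∣ x.val then 1 else 0) - (if p ^ (m - i) ∣ x.val then 1 else 0)) :
          ℝ) : ℂ) * epair p m x y =
        shellWeight p b m i * ((if p ^ (i + 1) ∣ y.val then (p : ℂ) ^ (i + 1) else 0) -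
          (if p ^ i ∣ y.val then (p : ℂ) ^ i else 0)) := by
    have hi := mem_range.mp hi
    rw [← sum_filter_pow_dvd_val_epair (show m - 1 - i + (i + 1) = m by omega),
      ← sum_filter_pow_dvd_val_epair (show m - i + i = m by omega), sum_filter, sum_filter,
      ← sum_sub_distrib, mul_sum]
    refine sum_congr rfl fun x _ => ?_
    split_ifs <;> push_cast <;> ring
  simp_rw [wfun_eq_sum_shellWeight p b m, Complex.ofReal_sum, sum_mul]
  rw [sum_comm, sum_congr rfl hshell]
  refine sum_congr rfl fun i _ => ?_
  split_ifs <;> push_cast <;> ring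

lemma cC_eq (p : ℕ) (b : ℝ) (m : ℕ) :
    cC p b m = ((p : ℝ) ^ b - 1) * ((p : ℝ) ^ b) ^ m / (((p : ℝ) ^ b) ^ m - 1) := by
  rw [cC, rpow_natCast_mul_eq_pow (Nat.cast_nonneg p)]

lemma shellWeight_mul_pow (p : ℕ) [NeZero p] (b : ℝ) (m i : ℕ) :
    shellWeight p b m i * (p : ℝ) ^ i =
      cC p b m * ((p : ℝ) ^ b)⁻¹ ^ (i + 1) / ((p : ℝ) - 1) := by
  have : (p : ℝ) ^ i ≠ 0 := pow_ne_zero _ (NeZero.ne _)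
  rw [shellWeight, div_mul_eq_mul_div, mul_comm ((p : ℝ) - 1), ← div_div,
    mul_div_cancel_right₀ _ this]

lemma shellWeight_mul_pow_succ_sub_pow {p : ℕ} (hp : 1 < p) (b : ℝ) (m i : ℕ) :
    shellWeight p b m i * (p : ℝ) ^ (i + 1) - shellWeight p b m i * (p : ℝ) ^ i =
      cC p b m * ((p : ℝ) ^ b)⁻¹ ^ (i + 1) := by
  have : NeZero p := ⟨by omega⟩
  have hp1 : (p : ℝ) - 1 ≠ 0 := sub_ne_zero.mpr (by exact_mod_cast hp.ne')
  rw [pow_succ, ← mul_assoc, ← mul_sub_one, shellWeight_mul_pow, div_mul_cancel₀ _ hp1]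

lemma cC_mul_sum_inv_pow {p : ℕ} {b : ℝ} (hq : 1 < (p : ℝ) ^ b) (m n : ℕ) :
    cC p b m * ∑ i ∈ range n, ((p : ℝ) ^ b)⁻¹ ^ (i + 1) =
      ((p : ℝ) ^ b) ^ m / (((p : ℝ) ^ b) ^ m - 1) * (1 - ((p : ℝ) ^ b)⁻¹ ^ n) := by
  rw [cC_eq]
  set q := (p : ℝ) ^ b
  have hq0 : q ≠ 0 := by positivity
  have hq1 : 1 - q ≠ 0 := sub_ne_zero.mpr hq.ne
  by_cases hqm : q ^ m - 1 = 0
  · simp [hqm]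
  simp_rw [pow_succ', ← mul_sum, geom_sum_eq (inv_ne_one.mpr hq.ne'), inv_pow]
  field_simp
  ring

-- With `q = p^b`, `β - 1 = (q - 1) / (q (p - 1))`: this is what absorbs the boundary term.
lemma cC_mul_sum_inv_pow_sub {p : ℕ} (hp : 1 < p) {b : ℝ} (hq : 1 < (p : ℝ) ^ b) (m v : ℕ) :
    cC p b m * ∑ i ∈ range v, ((p : ℝ) ^ b)⁻¹ ^ (i + 1) -
        cC p b m * ((p : ℝ) ^ b)⁻¹ ^ (v + 1) / ((p : ℝ) - 1) =
      ((p : ℝ) ^ b) ^ m / (((p : ℝ) ^ b) ^ m - 1) *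
        (1 - betaC p b * ((p : ℝ) ^ b)⁻¹ ^ v) := by
  rw [cC_mul_sum_inv_pow hq, cC_eq, betaC, Real.rpow_add_one (by positivity)]
  set q := (p : ℝ) ^ b
  have hq0 : q ≠ 0 := by positivity
  have hp1 : (p : ℝ) - 1 ≠ 0 := sub_ne_zero.mpr (by exact_mod_cast hp.ne')
  by_cases hqm : q ^ m - 1 = 0
  · simp [hqm]
  simp_rw [inv_pow]
  field_simp
  ring

lemma sum_range_ite_sub_ite {M : Type*} [AddCommGroup M] (f g : ℕ → M) {v m : ℕ}
    (hv : v < m) :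
    ∑ i ∈ range m, ((if i + 1 ≤ v then f i else 0) - (if i ≤ v then g i else 0)) =
      ∑ i ∈ range v, (f i - g i) - g v := by
  rw [← sum_range_add_sum_Ico _ hv, sum_range_succ,
    sum_eq_zero (s := Ico (v + 1) m) fun i hi => by grind,
    sum_congr (g := fun i => f i - g i) rfl fun i hi => by grind]
  simp [sub_eq_add_neg]

/-- The characteristic function of `w`: for nonzero `y` with `k = m − v_p(ȳ)`,
`Σ_x w(x)·e(x,y) = (p^{mb}/(p^{mb} − 1))·(1 − β·p^{(k−m)b})`; and for `y = 0` it is `1`. -/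
theorem stmt3 (p : ℕ) [Fact p.Prime] (b : ℝ) (hb : 0 < b) (m : ℕ) (hm : 0 < m) :
    (∀ y : ZMod (p ^ m), y ≠ 0 →
      ∑ x : ZMod (p ^ m), (wfun p b m x : ℂ) * epair p m x y =
        ((((p : ℝ) ^ ((m : ℝ) * b) / ((p : ℝ) ^ ((m : ℝ) * b) - 1)) *
          (1 - betaC p b *
            (p : ℝ) ^ ((((m - padicValNat p y.val : ℕ) : ℝ) - (m : ℝ)) * b)) : ℝ) : ℂ)) ∧
    (∑ x : ZMod (p ^ m), (wfun p b m x : ℂ) * epair p m x 0 = 1) := by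
  have hp : 1 < p := (Fact.out : p.Prime).one_lt
  have hq : 1 < (p : ℝ) ^ b := Real.one_lt_rpow (by exact_mod_cast hp) hb
  refine ⟨fun y hy => ?_, ?_⟩
  · have hv := padicValNat_val_lt hy
    rw [sum_wfun_mul_epair]
    simp_rw [padicValNat_dvd_iff_le ((ZMod.val_ne_zero y).mpr hy)]
    rw [sum_range_ite_sub_ite _ _ hv]
    simp_rw [shellWeight_mul_pow_succ_sub_pow hp, shellWeight_mul_pow]
    rw [← mul_sum, cC_mul_sum_inv_pow_sub hp hq, Nat.cast_sub hv.le, sub_sub_cancel_left,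
      rpow_neg_natCast_mul (Nat.cast_nonneg p), rpow_natCast_mul_eq_pow (Nat.cast_nonneg p)]
  · rw [sum_wfun_mul_epair]
    simp only [ZMod.val_zero, dvd_zero, if_true, shellWeight_mul_pow_succ_sub_pow hp]
    rw [← mul_sum, cC_mul_sum_inv_pow hq]
    have hqm : ((p : ℝ) ^ b) ^ m - 1 ≠ 0 := sub_ne_zero.mpr (one_lt_pow₀ hq hm.ne').ne'
    rw [inv_pow, ← Complex.ofReal_one]
    congr 1
    field_simp
end

section
/- One has φ(m) = (1 − β)·(1 + p^{−mb} + p^{−mb}(p^{mb} − 1)^{−1}), and consequently φ(m) < 0, while φ(m−1) > 0. -/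
/-- φ(k), with φ(0) = 1. -/
noncomputable def phiC (p : ℕ) (b : ℝ) (m : ℕ) (k : ℕ) : ℝ :=
  if k = 0 then 1 else
    ((p : ℝ) ^ ((m : ℝ) * b) / ((p : ℝ) ^ ((m : ℝ) * b) - 1)) *
      (1 - betaC p b * (p : ℝ) ^ (((k : ℝ) - (m : ℝ)) * b))

/-- `φ(m) = (1 − β)·(1 + p^{−mb} + p^{−mb}(p^{mb} − 1)^{−1})`, hence `φ(m) < 0`,
while `φ(m−1) > 0`. -/
theorem stmt6 (p : ℕ) (hp : p.Prime) (b : ℝ) (hb : 0 < b) (m : ℕ) (hm : 2 ≤ m) :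
    phiC p b m m =
      (1 - betaC p b) *
        (1 + (p : ℝ) ^ (-(m : ℝ) * b) +
          (p : ℝ) ^ (-(m : ℝ) * b) * ((p : ℝ) ^ ((m : ℝ) * b) - 1)⁻¹) ∧
    phiC p b m m < 0 ∧ 0 < phiC p b m (m - 1) := by
  have hp2 : 2 ≤ (p : ℝ) := by exact_mod_cast hp.two_le
  have hp1 : 1 < (p : ℝ) := by linarith
  have hp0 : 0 < (p : ℝ) := by linarith
  have ht : 1 < (p : ℝ) ^ b :=
    Real.one_lt_rpow_iff_of_pos hp0 |>.2 (Or.inl ⟨hp1, hb⟩)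
  have hX : 1 < (p : ℝ) ^ ((m : ℝ) * b) := by
    apply Real.one_lt_rpow_iff_of_pos hp0 |>.2
    refine Or.inl ⟨hp1, ?_⟩
    have h0m : (0:ℝ) < (m:ℝ) := by
      have : (0:ℕ) < m := by omega
      exact_mod_cast this
    positivity
  have htpos : 0 < (p : ℝ) ^ b := by linarith
  have hm0 : m ≠ 0 := by omega
  have hbeta1 : 1 < betaC p b := by
    rw [betaC]
    rw [one_lt_div (by nlinarith)]
    rw [Real.rpow_add hp0, Real.rpow_one]
    nlinarith
  have hXe : ((m:ℝ) - (m:ℝ)) * b = 0 := by ring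
  have hphm : phiC p b m m =
      ((p : ℝ) ^ ((m : ℝ) * b) / ((p : ℝ) ^ ((m : ℝ) * b) - 1)) * (1 - betaC p b) := by
    rw [phiC, if_neg hm0, hXe, Real.rpow_zero, mul_one]
  have hXne : (p : ℝ) ^ ((m : ℝ) * b) - 1 ≠ 0 := by linarith
  have hXne' : (p : ℝ) ^ ((m : ℝ) * b) ≠ 0 := by positivity
  have hinv : (p : ℝ) ^ (-(m : ℝ) * b) = ((p : ℝ) ^ ((m : ℝ) * b))⁻¹ := by
    rw [neg_mul, Real.rpow_neg hp0.le]
  constructor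
  · rw [hphm, hinv]
    field_simp
    ring
  constructor
  · rw [hphm]
    apply mul_neg_of_pos_of_neg
    · apply div_pos (by linarith) (by linarith)
    · linarith
  · have hcast : ((m - 1 : ℕ) : ℝ) = (m : ℝ) - 1 := by
      have : (1:ℕ) ≤ m := by omega
      push_cast [this]; ring
    have hphm1 : phiC p b m (m - 1) =
        ((p : ℝ) ^ ((m : ℝ) * b) / ((p : ℝ) ^ ((m : ℝ) * b) - 1)) *
          (1 - betaC p b * (p : ℝ) ^ (-b)) := by
      rw [phiC, if_neg (by omega), hcast]
      ring_nf
    rw [hphm1]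
    apply mul_pos (div_pos (by linarith) (by linarith))
    have hkey : betaC p b * (p : ℝ) ^ (-b) < 1 := by
      rw [betaC, Real.rpow_neg hp0.le, Real.rpow_add hp0, Real.rpow_one]
      rw [← div_eq_mul_inv, div_div, div_lt_one (mul_pos (mul_pos htpos (by linarith)) htpos)]
      have h1 : ((p:ℝ)^b - 1) * (((p:ℝ) - 1) * (p:ℝ)^b - 1) > 0 := by
        apply mul_pos (by linarith)
        nlinarith
      nlinarith
    linarith
end

section
/- The finite sequence φ(1), φ(2), …, φ(m) is strictly decreasing, and for every i ∈ {1,…,m−1} one has 0 ≤ φ(i) ≤ 1. -/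
/-- The finite sequence `φ(1), …, φ(m)` is strictly decreasing, and for every
`i ∈ {1,…,m−1}` one has `0 ≤ φ(i) ≤ 1`. -/
theorem stmt7 (p : ℕ) (hp : p.Prime) (b : ℝ) (hb : 0 < b) (m : ℕ) (hm : 2 ≤ m) :
    (∀ i j : ℕ, 1 ≤ i → i < j → j ≤ m → phiC p b m j < phiC p b m i) ∧
    (∀ i : ℕ, 1 ≤ i → i ≤ m - 1 → 0 ≤ phiC p b m i ∧ phiC p b m i ≤ 1) := by
  have hx2 : (2:ℝ) ≤ (p:ℝ) := by exact_mod_cast hp.two_le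
  have hx : (1:ℝ) < (p:ℝ) := by linarith
  have hx0 : (0:ℝ) < (p:ℝ) := by linarith
  set x : ℝ := (p : ℝ) with hxdef
  set P : ℝ := x ^ b with hPdef
  have hP : 1 < P := by
    rw [hPdef]
    exact Real.one_lt_rpow_iff_of_pos hx0 |>.mpr (Or.inl ⟨hx, hb⟩)
  have hβ : betaC p b = (P * x - 1) / (P * (x - 1)) := by
    rw [betaC, Real.rpow_add hx0, Real.rpow_one]
  have hβ0 : 0 < betaC p b := by
    rw [hβ]
    apply div_pos (by nlinarith) (by nlinarith)
  have hβP : 1 ≤ betaC p b * P := by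
    rw [hβ, div_mul_eq_mul_div, le_div_iff₀ (by nlinarith)]
    nlinarith [mul_pos (mul_pos (show (0:ℝ) < P by linarith) hx0) (sub_pos.2 hP)]
  have hβltP : betaC p b < P := by
    rw [hβ, div_lt_iff₀ (by nlinarith)]
    nlinarith [mul_pos (show (0:ℝ) < P*(x-1)-1 by nlinarith) (sub_pos.2 hP)]
  set Q : ℝ := x ^ ((m : ℝ) * b) with hQdef
  have hQ : 1 < Q := by
    rw [hQdef]
    refine Real.one_lt_rpow_iff_of_pos hx0 |>.mpr (Or.inl ⟨hx, ?_⟩)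
    have : (2:ℝ) ≤ (m:ℝ) := by exact_mod_cast hm
    nlinarith
  have hA : 0 < Q / (Q - 1) := div_pos (by linarith) (by linarith)
  constructor
  · intro i j hi hij hjm
    have hi0 : i ≠ 0 := by omega
    have hj0 : j ≠ 0 := by omega
    rw [phiC, phiC, if_neg hi0, if_neg hj0]
    have hijR : (i:ℝ) < (j:ℝ) := by exact_mod_cast hij
    have ht : x ^ (((i:ℝ) - (m:ℝ)) * b) < x ^ (((j:ℝ) - (m:ℝ)) * b) := by
      refine (Real.rpow_lt_rpow_left_iff hx).mpr ?_
      nlinarith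
    have := mul_lt_mul_of_pos_left ht hβ0
    apply mul_lt_mul_of_pos_left _ hA
    linarith
  · intro i hi1 him
    have hi0 : i ≠ 0 := by omega
    have hiR : (1:ℝ) ≤ (i:ℝ) := by exact_mod_cast hi1
    have him' : (i:ℝ) + 1 ≤ (m:ℝ) := by exact_mod_cast (by omega : i + 1 ≤ m)
    rw [phiC, if_neg hi0]
    set t : ℝ := x ^ (((i:ℝ) - (m:ℝ)) * b) with htdef
    have ht0 : 0 < t := Real.rpow_pos_of_pos hx0 _
    have ht_le : t ≤ P⁻¹ := by
      rw [htdef, hPdef, ← Real.rpow_neg hx0.le]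
      refine (Real.rpow_le_rpow_left_iff hx).mpr ?_
      nlinarith
    have hβt : betaC p b * t < 1 := by
      have h1 : betaC p b * t ≤ betaC p b * P⁻¹ :=
        mul_le_mul_of_nonneg_left ht_le hβ0.le
      have h2 : betaC p b * P⁻¹ < 1 := by
        rw [← div_eq_mul_inv, div_lt_one (by linarith)]
        exact hβltP
      linarith
    constructor
    · exact mul_nonneg hA.le (by linarith)
    · rw [div_mul_eq_mul_div, div_le_one (by linarith : (0:ℝ) < Q - 1)]
      have hQt : Q * t = x ^ ((i:ℝ) * b) := by
        rw [hQdef, htdef, ← Real.rpow_add hx0]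
        congr 1
        ring
      have hu : P ≤ x ^ ((i:ℝ) * b) := by
        rw [hPdef]
        refine (Real.rpow_le_rpow_left_iff hx).mpr ?_
        nlinarith
      have h1 : betaC p b * P ≤ betaC p b * (Q * t) := by
        rw [hQt]; exact mul_le_mul_of_nonneg_left hu hβ0.le
      nlinarith
end

section
/- For every real r > 0 and every i ∈ {0,1,…,m}, the r-th moment of the norm over the ball of radius p^{−i} with respect to normalized counting measure satisfies p^{−m} · Σ_{x ∈ G_m, ‖x‖ ≤ p^{−i}} ‖x‖^r = (p − 1)·p^r·(p^{−i(r+1)} − p^{−m(r+1)})/(p^{r+1} − 1). -/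
open scoped BigOperators Classical

/-- The norm on `G_m = ZMod (p^m)`: `‖x‖ = p^{−v_p(x̄)}` for `x ≠ 0`, `‖0‖ = 0`. -/
noncomputable def pnorm (p m : ℕ) (x : ZMod (p ^ m)) : ℝ :=
  if x = 0 then 0 else (p : ℝ) ^ (-(padicValNat p x.val : ℤ))

/-!
The ball `‖x‖ ≤ p^{-i}` is `{x | p^i ∣ x̄}`. It splits into the ball of radius `p^{-(i+1)}` and the
sphere `‖x‖ = p^{-i}`, which has `p^{m-i-1}(p-1)` elements, so the moments satisfy a first-order
recurrence in `i` that runs down from `0` at `i = m`, where the ball is `{0}`. The closed form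
satisfies the same recurrence.
-/

open Finset

lemma Nat.card_filter_range_mul_dvd {d : ℕ} (hd : 0 < d) (c : ℕ) :
    #{k ∈ range (d * c) | d ∣ k} = c := by
  have : {k ∈ range (d * c) | d ∣ k} =
      (range c).map ⟨(d * ·), mul_right_injective₀ hd.ne'⟩ := by
    ext k
    simp only [mem_filter, mem_range, mem_map, Function.Embedding.coeFn_mk]
    constructor
    · rintro ⟨hk, a, rfl⟩
      exact ⟨a, Nat.lt_of_mul_lt_mul_left hk, rfl⟩
    · rintro ⟨a, ha, rfl⟩
      exact ⟨Nat.mul_lt_mul_of_pos_left ha hd, dvd_mul_right d a⟩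
  rw [this, card_map, card_range]

lemma ZMod.card_filter_dvd_val {n d : ℕ} [NeZero n] (hd : d ∣ n) :
    #{x : ZMod n | d ∣ x.val} = n / d := by
  have hval : #{x : ZMod n | d ∣ x.val} = #{k ∈ range n | d ∣ k} := by
    refine card_nbij' ZMod.val (fun k => (k : ZMod n)) ?_ ?_ ?_ ?_
    · intro x hx
      simp_all [ZMod.val_lt]
    · intro k hk
      simp_all [Nat.mod_eq_of_lt]
    · intro x _
      simp
    · intro k hk
      simp_all [Nat.mod_eq_of_lt]
  have hd₀ : 0 < d := Nat.pos_of_dvd_of_pos hd (NeZero.pos n)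
  obtain ⟨c, rfl⟩ := hd
  rw [hval, Nat.card_filter_range_mul_dvd hd₀, Nat.mul_div_cancel_left c hd₀]

lemma Real.rpow_neg_natCast_mul_add_one {x : ℝ} (hx : 0 < x) (n : ℕ) (r : ℝ) :
    x ^ (-(n : ℝ) * (r + 1)) = ((x * x ^ r) ^ n)⁻¹ := by
  rw [neg_mul, Real.rpow_neg hx.le, mul_comm, Real.rpow_mul_natCast hx.le,
    Real.rpow_add_one hx.ne', mul_comm]

lemma pnorm_eq_ite {p m : ℕ} (x : ZMod (p ^ m)) :
    pnorm p m x = if x = 0 then 0 else ((p : ℝ) ^ padicValNat p x.val)⁻¹ := by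
  simp [pnorm, zpow_neg]

variable {p m : ℕ} [Fact p.Prime]

lemma pnorm_le_inv_pow_iff (x : ZMod (p ^ m)) (i : ℕ) :
    pnorm p m x ≤ ((p : ℝ) ^ i)⁻¹ ↔ p ^ i ∣ x.val := by
  rw [pnorm_eq_ite]
  split_ifs with hx
  · simp [hx]
  · have hp : (1 : ℝ) < p := by exact_mod_cast (Fact.out : p.Prime).one_lt
    rw [inv_le_inv₀ (by positivity) (by positivity), pow_le_pow_iff_right₀ hp,
      padicValNat_dvd_iff_le ((ZMod.val_ne_zero x).mpr hx)]

lemma pnorm_eq_inv_pow {x : ZMod (p ^ m)} {i : ℕ} (h : p ^ i ∣ x.val)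
    (h' : ¬p ^ (i + 1) ∣ x.val) :
    pnorm p m x = ((p : ℝ) ^ i)⁻¹ := by
  have hx : x.val ≠ 0 := by rintro hx; exact h' (hx ▸ dvd_zero _)
  rw [padicValNat_dvd_iff_le hx] at h h'
  rw [pnorm_eq_ite, if_neg ((ZMod.val_ne_zero x).mp hx), show padicValNat p x.val = i by omega]

lemma card_filter_pow_dvd_val_not_dvd {i : ℕ} (hi : i < m) :
    #{x : ZMod (p ^ m) | p ^ i ∣ x.val ∧ ¬p ^ (i + 1) ∣ x.val} =
      p ^ (m - (i + 1)) * (p - 1) := by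
  have hp := (Fact.out : p.Prime).pos
  have hsplit := card_filter_add_card_filter_not (s := {x : ZMod (p ^ m) | p ^ i ∣ x.val})
    (fun x => p ^ (i + 1) ∣ x.val)
  simp only [filter_filter] at hsplit
  rw [filter_congr (fun x _ => and_iff_right_of_imp ((pow_dvd_pow p i.le_succ).trans ·)),
    ZMod.card_filter_dvd_val (pow_dvd_pow p (show i + 1 ≤ m from hi)),
    ZMod.card_filter_dvd_val (pow_dvd_pow p hi.le),
    Nat.pow_div (show i + 1 ≤ m from hi) hp, Nat.pow_div hi.le hp] at hsplit
  rw [Nat.mul_sub_one, ← pow_succ, show m - (i + 1) + 1 = m - i by omega]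
  omega

lemma sum_pnorm_rpow_filter_pow_self_dvd {r : ℝ} (hr : r ≠ 0) :
    ∑ x : ZMod (p ^ m) with p ^ m ∣ x.val, pnorm p m x ^ r = 0 := by
  refine sum_eq_zero fun x hx => ?_
  rw [mem_filter] at hx
  have : x = 0 := (ZMod.val_eq_zero x).mp (Nat.eq_zero_of_dvd_of_lt hx.2 (ZMod.val_lt x))
  simp [this, pnorm, Real.zero_rpow hr]

lemma sum_pnorm_rpow_filter_pow_dvd_succ (r : ℝ) {i : ℕ} (hi : i < m) :
    ∑ x : ZMod (p ^ m) with p ^ i ∣ x.val, pnorm p m x ^ r =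
      ∑ x : ZMod (p ^ m) with p ^ (i + 1) ∣ x.val, pnorm p m x ^ r +
        (p ^ (m - (i + 1)) * (p - 1) : ℕ) * (((p : ℝ) ^ r) ^ i)⁻¹ := by
  rw [← sum_filter_add_sum_filter_not _ (fun x => p ^ (i + 1) ∣ x.val), filter_filter,
    filter_filter, ← card_filter_pow_dvd_val_not_dvd hi, ← nsmul_eq_mul, ← sum_const]
  congr 1
  · exact sum_congr
      (filter_congr fun x _ => and_iff_right_of_imp ((pow_dvd_pow p i.le_succ).trans ·))
      fun _ _ => rfl
  · refine sum_congr rfl fun x hx => ?_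
    rw [mem_filter] at hx
    rw [pnorm_eq_inv_pow hx.2.1 hx.2.2, Real.inv_rpow (by positivity),
      ← Real.rpow_pow_comm (by positivity)]

-- Cleared of the denominator `p ^ (r + 1) - 1`, which vanishes at `r = -1`.
lemma sum_pnorm_rpow_filter_pow_dvd_mul {r : ℝ} (hr : r ≠ 0) {i : ℕ} (hi : i ≤ m) :
    (∑ x : ZMod (p ^ m) with p ^ i ∣ x.val, pnorm p m x ^ r) * (p * (p : ℝ) ^ r - 1) =
      p ^ m * (p - 1) * (p : ℝ) ^ r * (((p * (p : ℝ) ^ r) ^ i)⁻¹ - ((p * (p : ℝ) ^ r) ^ m)⁻¹) := by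
  have hp := (Fact.out : p.Prime).one_lt
  induction hi using Nat.decreasingInduction with
  | self => rw [sum_pnorm_rpow_filter_pow_self_dvd hr]; simp
  | of_succ k hk ih =>
    obtain ⟨j, rfl⟩ := Nat.exists_eq_add_of_lt hk
    rw [sum_pnorm_rpow_filter_pow_dvd_succ r hk, add_mul, ih,
      show k + j + 1 - (k + 1) = j by omega]
    push_cast [Nat.cast_sub hp.le]
    field_simp
    ring

theorem stmt9_general (p : ℕ) [Fact p.Prime] (m : ℕ) (r : ℝ) (hr : 0 < r)
    (i : ℕ) (hi : i ≤ m) :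
    (p : ℝ) ^ (-(m : ℝ)) *
      ∑ x ∈ Finset.univ.filter (fun x : ZMod (p ^ m) => pnorm p m x ≤ (p : ℝ) ^ (-(i : ℝ))),
        pnorm p m x ^ r =
      ((p : ℝ) - 1) * (p : ℝ) ^ r *
        ((p : ℝ) ^ (-(i : ℝ) * (r + 1)) - (p : ℝ) ^ (-(m : ℝ) * (r + 1))) /
        ((p : ℝ) ^ (r + 1) - 1) := by
  have hP : (1 : ℝ) < p := by exact_mod_cast (Fact.out : p.Prime).one_lt
  have hP₀ : (0 : ℝ) < p := by positivity
  have hden : (0 : ℝ) < (p : ℝ) ^ r * p - 1 := by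
    nlinarith [Real.one_le_rpow hP.le hr.le]
  simp only [Real.rpow_neg hP₀.le, Real.rpow_natCast, pnorm_le_inv_pow_iff,
    Real.rpow_neg_natCast_mul_add_one hP₀, Real.rpow_add_one hP₀.ne']
  rw [eq_div_iff hden.ne', mul_comm ((p : ℝ) ^ r), mul_assoc,
    sum_pnorm_rpow_filter_pow_dvd_mul hr.ne' hi]
  field_simp

/-- For every `r > 0` and `i ∈ {0,…,m}`, the `r`-th moment of the norm over the ball of
radius `p^{−i}` with respect to normalized counting measure satisfies
`p^{−m} · Σ_{‖x‖ ≤ p^{−i}} ‖x‖^r = (p − 1)·p^r·(p^{−i(r+1)} − p^{−m(r+1)})/(p^{r+1} − 1)`. -/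
theorem stmt9 (p : ℕ) [Fact p.Prime] (m : ℕ) (hm : 0 < m) (r : ℝ) (hr : 0 < r)
    (i : ℕ) (hi : i ≤ m) :
    (p : ℝ) ^ (-(m : ℝ)) *
      ∑ x ∈ Finset.univ.filter (fun x : ZMod (p ^ m) => pnorm p m x ≤ (p : ℝ) ^ (-(i : ℝ))),
        pnorm p m x ^ r =
      ((p : ℝ) - 1) * (p : ℝ) ^ r *
        ((p : ℝ) ^ (-(i : ℝ) * (r + 1)) - (p : ℝ) ^ (-(m : ℝ) * (r + 1))) /
        ((p : ℝ) ^ (r + 1) - 1) :=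
  stmt9_general p m r hr i hi
end

section
/- Let D > 0 and σ = D/β. For each positive integer m define E_m(t,⟦y⟧) on (0,∞) × (ℚ_p/ℤ_p) by: E_m(t,⟦y⟧) = ((p^{mb}/(p^{mb}−1))·(1 − β·|⟦y⟧|^b·p^{−mb}))^{⌊tσp^{mb}⌋} if 0 < |⟦y⟧| ≤ p^m, E_m(t,⟦0⟧) = 1, and E_m(t,⟦y⟧) = 0 if |⟦y⟧| > p^m; and define g(t,⟦y⟧) = exp(−D(|⟦y⟧|^b − β^{−1})t) for ⟦y⟧ ≠ ⟦0⟧ and g(t,⟦0⟧) = 1. Then for every t > 0, the sum over the countable group ℚ_p/ℤ_p satisfies Σ_{⟦y⟧ ∈ ℚ_p/ℤ_p} |E_m(t,⟦y⟧) − g(t,⟦y⟧)| → 0 as m → ∞. -/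
open scoped Classical

/-- The ring of `p`-adic integers `ℤ_p` as an additive subgroup of `ℚ_p`. -/
noncomputable def ZpSub (p : ℕ) [Fact p.Prime] : AddSubgroup ℚ_[p] where
  carrier := {x : ℚ_[p] | ‖x‖ ≤ 1}
  zero_mem' := by simp
  add_mem' := fun ha hb => le_trans (Padic.nonarchimedean _ _) (max_le ha hb)
  neg_mem' := fun ha => by simpa using ha

/-! Write `P = p^{mb}`, `A = |⟦y⟧|^b ≥ 1` and `x = tσ`. For `A ≤ P` the base of `E_m` is
`1 - u` with `u = (βA - 1)/(P - 1)` and the exponent is `⌊xP⌋`, so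
`E_m(t,⟦y⟧) → exp(-x(βA - 1)) = g(t,⟦y⟧)`. Because `β < 2`, for large `P` we have
`0 ≤ u ≤ 2 - δ` with `δ = (2 - β)/2`, hence `|1 - u| ≤ exp(-δu/2)`, which bounds `|E_m - g|` by
`C exp(-κA)` uniformly in `m`. Only `(p - 1)p^{k-1}` cosets have absolute value `p^k`, so this
bound is summable, and dominated convergence for sums concludes. -/

open Filter Topology Real

theorem tendsto_one_sub_div_sub_one_pow_floor (a : ℝ) {x : ℝ} (hx : 0 ≤ x) :
    Tendsto (fun s : ℝ => (1 - a / (s - 1)) ^ ⌊x * s⌋₊) atTop (𝓝 (exp (-(x * a)))) := by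
  have hlin : Tendsto (fun s : ℝ => s * (-a / (s - 1))) atTop (𝓝 (-a)) := by
    have h := tendsto_const_nhds (x := -a) |>.add <|
      tendsto_const_nhds (x := -a) |>.div_atTop (tendsto_atTop_add_const_right _ (-1) tendsto_id)
    rw [add_zero] at h
    refine h.congr' ?_
    filter_upwards [eventually_gt_atTop 1] with s hs
    have : s - 1 ≠ 0 := by linarith
    simp only [id, ← sub_eq_add_neg]
    field_simp
    ring
  have hexp : Tendsto (fun s : ℝ => ⌊x * s⌋₊ / s * (s * log (1 + -a / (s - 1)))) atTop
      (𝓝 (x * -a)) :=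
    (tendsto_nat_floor_mul_div_atTop hx).mul (tendsto_mul_log_one_add_of_tendsto hlin)
  rw [mul_neg] at hexp
  refine ((continuous_exp.tendsto _).comp hexp).congr' ?_
  filter_upwards [eventually_gt_atTop (1 + |a|)] with s hs
  have hs1 : 0 < s - 1 := by linarith [abs_nonneg a]
  have hbase : 0 < 1 - a / (s - 1) := by
    rw [sub_pos, div_lt_one hs1]
    linarith [le_abs_self a]
  have hlog : ⌊x * s⌋₊ / s * (s * log (1 + -a / (s - 1))) = ⌊x * s⌋₊ * log (1 - a / (s - 1)) := by
    rw [neg_div, ← sub_eq_add_neg]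
    field_simp [(by linarith : s ≠ 0)]
  rw [Function.comp_apply, hlog, ← log_pow, exp_log (pow_pos hbase _)]

theorem abs_one_sub_le_exp_neg {δ u : ℝ} (hδ2 : δ ≤ 2) (hu : 0 ≤ u)
    (hu2 : u ≤ 2 - δ) : |1 - u| ≤ exp (-(δ / 2 * u)) := by
  refine le_trans ?_ (add_one_le_exp _)
  rw [abs_le]
  constructor <;>
    nlinarith [mul_le_mul_of_nonneg_left (by linarith : δ ≤ 2 - u) hu, sq_nonneg (2 - u)]

theorem abs_one_sub_div_pow_floor_le {δ x a s : ℝ} (hδ : 0 ≤ δ) (hδ2 : δ ≤ 2) (hs : 1 < s)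
    (hxs : 2 ≤ x * s) (ha : 0 ≤ a) (has : a ≤ (2 - δ) * (s - 1)) :
    |(1 - a / (s - 1)) ^ ⌊x * s⌋₊| ≤ exp (-(δ * x / 4 * a)) := by
  have hs1 : 0 < s - 1 := by linarith
  have hu : 0 ≤ a / (s - 1) := div_nonneg ha hs1.le
  have hN : x * s / 2 ≤ ⌊x * s⌋₊ := by linarith [Nat.sub_one_lt_floor (x * s)]
  calc |(1 - a / (s - 1)) ^ ⌊x * s⌋₊|
      ≤ exp (-(δ / 2 * (a / (s - 1)))) ^ ⌊x * s⌋₊ := by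
        rw [abs_pow]
        exact pow_le_pow_left₀ (abs_nonneg _)
          (abs_one_sub_le_exp_neg hδ2 hu ((div_le_iff₀ hs1).mpr has)) _
    _ = exp (-(⌊x * s⌋₊ * (δ / 2) * (a / (s - 1)))) := by
        rw [← exp_nat_mul]
        ring_nf
    _ ≤ exp (-(δ * x / 4 * a)) := by
        rw [exp_le_exp, neg_le_neg_iff]
        calc δ * x / 4 * a = δ / 2 * (x * (s - 1) / 2) * (a / (s - 1)) := by
              field_simp
              ring
          _ ≤ ⌊x * s⌋₊ * (δ / 2) * (a / (s - 1)) := by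
              rw [mul_comm (⌊x * s⌋₊ : ℝ)]
              gcongr
              nlinarith

/-- `E_m(t, ⟦y⟧)` for `⟦y⟧ ≠ ⟦0⟧`, in the variables `P = p^{mb}`, `A = |⟦y⟧|^b` and `x = tσ`. -/
noncomputable def approxKernel (β x P A : ℝ) : ℝ :=
  if A ≤ P then (P / (P - 1) * (1 - β * A * P⁻¹)) ^ ⌊x * P⌋₊ else 0

theorem approxKernel_of_le {β x P A : ℝ} (hP : 1 < P) (hA : A ≤ P) :
    approxKernel β x P A = (1 - (β * A - 1) / (P - 1)) ^ ⌊x * P⌋₊ := by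
  have hP0 : P ≠ 0 := by linarith
  have hP1 : P - 1 ≠ 0 := by linarith
  rw [approxKernel, if_pos hA]
  congr 1
  field_simp
  ring

theorem tendsto_approxKernel (β A : ℝ) {x : ℝ} (hx : 0 ≤ x) :
    Tendsto (fun P => approxKernel β x P A) atTop (𝓝 (exp (-(x * (β * A - 1))))) := by
  refine (tendsto_one_sub_div_sub_one_pow_floor _ hx).congr' ?_
  filter_upwards [eventually_gt_atTop 1, eventually_ge_atTop A] with P hP hA
  rw [approxKernel_of_le hP hA]

theorem eventually_abs_approxKernel_sub_exp_le {β x : ℝ} (hβ1 : 1 ≤ β) (hβ2 : β < 2)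
    (hx : 0 < x) :
    ∀ᶠ P in atTop, ∀ A, 1 ≤ A →
      |approxKernel β x P A - exp (-(x * (β * A - 1)))|
        ≤ 2 * exp ((2 - β) * x / 8) * exp (-((2 - β) * x / 8 * A)) := by
  set δ := (2 - β) / 2 with hδ
  have hδ0 : 0 < δ := by linarith
  -- `P ≥ (1 - δ)/δ` is what makes `βP - 1 ≤ (2 - δ)(P - 1)`
  filter_upwards [eventually_gt_atTop 1, eventually_ge_atTop (2 / x),
    eventually_ge_atTop ((1 - δ) / δ)] with P hP hPx hPδ A hA
  have ha : 0 ≤ β * A - 1 := by nlinarith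
  have hg : exp (-(x * (β * A - 1))) ≤ exp (-(δ * x / 4 * (β * A - 1))) := by
    rw [exp_le_exp, neg_le_neg_iff]
    exact mul_le_mul_of_nonneg_right (by nlinarith) ha
  have hE : |approxKernel β x P A| ≤ exp (-(δ * x / 4 * (β * A - 1))) := by
    by_cases hAP : A ≤ P
    · rw [approxKernel_of_le hP hAP]
      refine abs_one_sub_div_pow_floor_le hδ0.le (by linarith) hP ?_ ha ?_
      · rw [div_le_iff₀ hx] at hPx
        linarith
      · rw [div_le_iff₀ hδ0] at hPδ
        nlinarith
    · rw [approxKernel, if_neg hAP, abs_zero]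
      positivity
  calc |approxKernel β x P A - exp (-(x * (β * A - 1)))|
      ≤ |approxKernel β x P A| + exp (-(x * (β * A - 1))) := by
        simpa [abs_exp] using abs_sub (approxKernel β x P A) (exp (-(x * (β * A - 1))))
    _ ≤ 2 * exp (-(δ * x / 4 * (β * A - 1))) := by
        linarith
    _ ≤ 2 * exp ((2 - β) * x / 8) * exp (-((2 - β) * x / 8 * A)) := by
        rw [mul_assoc, ← exp_add]
        gcongr
        rw [hδ]
        nlinarith [mul_nonneg (mul_nonneg (mul_nonneg (sub_nonneg.2 hβ2.le) hx.le)
          (sub_nonneg.2 hβ1)) (by linarith : (0:ℝ) ≤ A)]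

theorem tendsto_tsum_abs_approxKernel_sub_exp {ι : Type*} {β x b : ℝ} (hβ1 : 1 ≤ β)
    (hβ2 : β < 2) (hx : 0 < x) (hb : 0 ≤ b) {r : ι → ℝ} (hr : ∀ i, r i ≠ 0 → 1 ≤ r i)
    (hsum : ∀ c > 0, Summable fun i => exp (-(c * r i ^ b)))
    {P : ℕ → ℝ} (hP : Tendsto P atTop atTop) :
    Tendsto (fun m => ∑' i, if r i = 0 then 0
        else |approxKernel β x (P m) (r i ^ b) - exp (-(x * (β * r i ^ b - 1)))|)
      atTop (𝓝 0) := by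
  have hκ : 0 < (2 - β) * x / 8 := by nlinarith
  rw [show (𝓝 (0 : ℝ)) = 𝓝 (∑' _ : ι, 0) by rw [tsum_zero]]
  refine tendsto_tsum_of_dominated_convergence
    (bound := fun i => 2 * exp ((2 - β) * x / 8) * exp (-((2 - β) * x / 8 * r i ^ b)))
    ((hsum _ hκ).mul_left _) (fun i => ?_) ?_
  · split_ifs with hi
    · exact tendsto_const_nhds
    · simpa using (((tendsto_approxKernel β (r i ^ b) hx.le).comp hP).sub_const
        (exp (-(x * (β * r i ^ b - 1))))).abs
  · filter_upwards [hP.eventually (eventually_abs_approxKernel_sub_exp_le hβ1 hβ2 hx)]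
      with m hm i
    split_ifs with hi
    · simp only [norm_zero]
      positivity
    · rw [Real.norm_eq_abs, abs_abs]
      exact hm _ (one_le_rpow (hr i hi) hb)

theorem summable_pow_mul_exp_neg_mul_pow {a Q c : ℝ} (ha : 0 < a) (hQ : 1 < Q) (hc : 0 < c) :
    Summable fun n : ℕ => a ^ n * exp (-(c * Q ^ n)) := by
  refine summable_of_ratio_test_tendsto_lt_one zero_lt_one
    (Eventually.of_forall fun n => by positivity) ?_
  have hratio : ∀ n : ℕ, ‖a ^ (n + 1) * exp (-(c * Q ^ (n + 1)))‖ / ‖a ^ n * exp (-(c * Q ^ n))‖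
      = a * exp (-(c * (Q - 1) * Q ^ n)) := fun n => by
    have hexp : -(c * Q ^ (n + 1)) = -(c * (Q - 1) * Q ^ n) + -(c * Q ^ n) := by ring
    rw [Real.norm_of_nonneg (by positivity), Real.norm_of_nonneg (by positivity),
      div_eq_iff (by positivity), hexp, exp_add, pow_succ]
    ring
  simp_rw [hratio]
  simpa using (tendsto_exp_atBot.comp <| tendsto_neg_atTop_atBot.comp <|
    (tendsto_pow_atTop_atTop_of_one_lt hQ).const_mul_atTop (by nlinarith : 0 < c * (Q - 1)))
    |>.const_mul a

namespace ZpSub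

variable {p : ℕ} [Fact p.Prime]

noncomputable def level (y : ℚ_[p]) : ℕ := (-y.valuation).toNat

theorem norm_le_pow_level (y : ℚ_[p]) : ‖y‖ ≤ (p : ℝ) ^ level y := by
  rcases eq_or_ne y 0 with rfl | hy
  · simp
  rw [Padic.norm_eq_zpow_neg_valuation hy, ← zpow_natCast]
  exact zpow_le_zpow_right₀ (by exact_mod_cast (Fact.out : p.Prime).one_le) (Int.self_le_toNat _)

theorem norm_eq_pow_level {y : ℚ_[p]} (hy : 1 < ‖y‖) : ‖y‖ = (p : ℝ) ^ level y := by
  have hy0 : y ≠ 0 := by rintro rfl; norm_num at hy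
  have hv : 0 ≤ -y.valuation := by
    have := (Padic.norm_le_one_iff_val_nonneg y).not.mp hy.not_ge
    omega
  rw [Padic.norm_eq_zpow_neg_valuation hy0, level, ← zpow_natCast, Int.toNat_of_nonneg hv]

theorem norm_pow_level_mul_le_one (y : ℚ_[p]) : ‖(p : ℚ_[p]) ^ level y * y‖ ≤ 1 := by
  rw [norm_mul, Padic.norm_p_pow, zpow_neg, zpow_natCast]
  exact inv_mul_le_one_of_le₀ (norm_le_pow_level y) (by positivity)

theorem one_lt_norm_out {q : ℚ_[p] ⧸ ZpSub p} (hq : q ≠ 0) : 1 < ‖q.out‖ := by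
  by_contra h
  rw [← QuotientAddGroup.out_eq' q, Ne, QuotientAddGroup.eq_zero_iff] at hq
  exact hq (not_lt.mp h)

/-- Every coset is `⟦j / p^n⟧` with `n` the level of its representatives and `0 ≤ j < p^n`;
`j` is read off from the `p`-adic digits of `p^n y`. -/
noncomputable def encode (q : ℚ_[p] ⧸ ZpSub p) : Σ n : ℕ, Fin (p ^ n) :=
  ⟨level q.out, ⟨PadicInt.appr ⟨_, norm_pow_level_mul_le_one q.out⟩ (level q.out),
    PadicInt.appr_lt _ _⟩⟩

noncomputable def decode (c : Σ n : ℕ, Fin (p ^ n)) : ℚ_[p] ⧸ ZpSub p :=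
  QuotientAddGroup.mk (((c.2 : ℕ) : ℚ_[p]) / (p : ℚ_[p]) ^ c.1)

theorem decode_encode : Function.LeftInverse decode (encode (p := p)) := by
  intro q
  set n := level q.out
  set z : ℤ_[p] := ⟨_, norm_pow_level_mul_le_one q.out⟩
  obtain ⟨w, hw⟩ := Ideal.mem_span_singleton'.mp (PadicInt.appr_spec n z)
  have hpn : (p : ℚ_[p]) ^ n ≠ 0 := pow_ne_zero _ (by exact_mod_cast (Fact.out : p.Prime).ne_zero)
  have hdiff : -(((z.appr n : ℕ) : ℚ_[p]) / (p : ℚ_[p]) ^ n) + q.out = w := by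
    have hz : (z : ℚ_[p]) = (p : ℚ_[p]) ^ n * q.out := rfl
    have := congrArg ((↑) : ℤ_[p] → ℚ_[p]) hw
    push_cast [hz] at this
    field_simp
    linear_combination -this
  conv_rhs => rw [← QuotientAddGroup.out_eq' q]
  refine QuotientAddGroup.eq.mpr ?_
  change ‖-(((z.appr n : ℕ) : ℚ_[p]) / (p : ℚ_[p]) ^ n) + q.out‖ ≤ 1
  rw [hdiff]
  exact w.2

theorem summable_exp_neg_mul_pow_fst {Q c : ℝ} (hQ : 1 < Q) (hc : 0 < c) :
    Summable fun s : Σ n : ℕ, Fin (p ^ n) => exp (-(c * Q ^ s.1)) := by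
  refine (summable_sigma_of_nonneg fun _ => (exp_pos _).le).mpr ⟨fun _ => .of_finite, ?_⟩
  simpa [tsum_fintype] using summable_pow_mul_exp_neg_mul_pow (a := p)
    (by exact_mod_cast (Fact.out : p.Prime).pos) hQ hc

variable {absQ : ℚ_[p] ⧸ ZpSub p → ℝ}

theorem one_le_of_ne_zero
    (habsQ : ∀ y : ℚ_[p], absQ (QuotientAddGroup.mk y) = if ‖y‖ ≤ 1 then 0 else ‖y‖)
    {q : ℚ_[p] ⧸ ZpSub p} (hq : absQ q ≠ 0) : 1 ≤ absQ q := by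
  rw [← QuotientAddGroup.out_eq' q, habsQ] at hq ⊢
  split_ifs at hq ⊢ with h
  · exact absurd rfl hq
  · exact (not_le.mp h).le

theorem summable_exp_neg_mul_rpow
    (habsQ : ∀ y : ℚ_[p], absQ (QuotientAddGroup.mk y) = if ‖y‖ ≤ 1 then 0 else ‖y‖)
    {b c : ℝ} (hb : 0 < b) (hc : 0 < c) : Summable fun q => exp (-(c * absQ q ^ b)) := by
  have hQ : 1 < (p : ℝ) ^ b := one_lt_rpow (by exact_mod_cast (Fact.out : p.Prime).one_lt) hb
  refine Summable.of_norm_bounded_eventually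
    ((summable_exp_neg_mul_pow_fst hQ hc).comp_injective decode_encode.injective) ?_
  filter_upwards [eventually_cofinite_ne 0] with q hq
  have h1 := one_lt_norm_out hq
  have habs : absQ q = (p : ℝ) ^ level q.out := by
    rw [← norm_eq_pow_level h1]
    conv_lhs => rw [← QuotientAddGroup.out_eq' q]
    rw [habsQ, if_neg h1.not_ge]
  rw [Real.norm_of_nonneg (exp_pos _).le, Function.comp_apply, habs,
    ← rpow_pow_comm (by positivity)]
  rfl

end ZpSub

theorem betaC_mem_Ico {p : ℕ} (hp : 2 ≤ p) {b : ℝ} (hb : 0 ≤ b) : betaC p b ∈ Set.Ico 1 2 := by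
  have hp2 : (2 : ℝ) ≤ p := by exact_mod_cast hp
  have hQ : 1 ≤ (p : ℝ) ^ b := one_le_rpow (by linarith) hb
  have hden : 0 < (p : ℝ) ^ b * ((p : ℝ) - 1) := mul_pos (by linarith) (by linarith)
  rw [betaC, rpow_add (by linarith), rpow_one]
  constructor
  · rw [le_div_iff₀ hden]
    nlinarith
  · rw [div_lt_iff₀ hden]
    nlinarith

theorem approxKernel_rpow_mul {p r b : ℝ} (hp : 0 ≤ p) (hr : 0 ≤ r) (hb : 0 < b) (β x m : ℝ) :
    approxKernel β x (p ^ (m * b)) (r ^ b)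
      = if r ≤ p ^ m then
          (p ^ (m * b) / (p ^ (m * b) - 1) * (1 - β * r ^ b * p ^ (-m * b))) ^ ⌊x * p ^ (m * b)⌋₊
        else 0 := by
  have hle : r ^ b ≤ p ^ (m * b) ↔ r ≤ p ^ m := by
    rw [rpow_mul hp, rpow_le_rpow_iff hr (rpow_nonneg hp _) hb]
  simp only [approxKernel, hle, neg_mul, rpow_neg hp]

/-- Let `D > 0`, `σ = D/β`, and let `absQ` be the absolute value on `ℚ_p/ℤ_p`
(so `absQ ⟦y⟧ = 0` if `y ∈ ℤ_p` and `absQ ⟦y⟧ = |y|_p` otherwise).  Define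
`E_m(t,⟦y⟧) = ((p^{mb}/(p^{mb}−1))·(1 − β·|⟦y⟧|^b·p^{−mb}))^{⌊tσp^{mb}⌋}` for
`0 < |⟦y⟧| ≤ p^m`, `E_m(t,⟦0⟧) = 1`, `E_m(t,⟦y⟧) = 0` for `|⟦y⟧| > p^m`, and
`g(t,⟦y⟧) = exp(−D(|⟦y⟧|^b − β⁻¹)t)` for `⟦y⟧ ≠ ⟦0⟧`, `g(t,⟦0⟧) = 1`.  Then for
every `t > 0`, `Σ_{⟦y⟧ ∈ ℚ_p/ℤ_p} |E_m(t,⟦y⟧) − g(t,⟦y⟧)| → 0` as `m → ∞`. -/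
theorem stmt18 (p : ℕ) [Fact p.Prime] (b D : ℝ) (hb : 0 < b) (hD : 0 < D)
    (absQ : (ℚ_[p] ⧸ ZpSub p) → ℝ)
    (habsQ : ∀ y : ℚ_[p],
      absQ (QuotientAddGroup.mk y) = if ‖y‖ ≤ 1 then 0 else ‖y‖)
    (t : ℝ) (ht : 0 < t) :
    Filter.Tendsto
      (fun m : ℕ =>
        ∑' q : ℚ_[p] ⧸ ZpSub p,
          |(if absQ q = 0 then (1 : ℝ)
            else if absQ q ≤ (p : ℝ) ^ (m : ℝ) then
              (((p : ℝ) ^ ((m : ℝ) * b) / ((p : ℝ) ^ ((m : ℝ) * b) - 1)) *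
                  (1 - betaC p b * absQ q ^ b * (p : ℝ) ^ (-(m : ℝ) * b))) ^
                ⌊t * (D / betaC p b) * (p : ℝ) ^ ((m : ℝ) * b)⌋₊
            else 0) -
          (if absQ q = 0 then (1 : ℝ)
            else Real.exp (-(D * (absQ q ^ b - (betaC p b)⁻¹) * t)))|)
      Filter.atTop (nhds 0) := by
  obtain ⟨hβ1, hβ2⟩ := betaC_mem_Ico (Fact.out : p.Prime).two_le hb.le
  have hp : (0 : ℝ) ≤ p := Nat.cast_nonneg p
  have hP : Tendsto (fun m : ℕ => (p : ℝ) ^ ((m : ℝ) * b)) atTop atTop := by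
    refine (tendsto_pow_atTop_atTop_of_one_lt (one_lt_rpow (x := (p : ℝ)) (z := b)
      (by exact_mod_cast (Fact.out : p.Prime).one_lt) hb)).congr fun m => ?_
    rw [← rpow_natCast, ← rpow_mul hp, mul_comm]
  refine (tendsto_tsum_abs_approxKernel_sub_exp hβ1 hβ2 (x := t * (D / betaC p b))
    (mul_pos ht (div_pos hD (by linarith))) hb.le (fun _ => ZpSub.one_le_of_ne_zero habsQ)
    (fun _ => ZpSub.summable_exp_neg_mul_rpow habsQ hb) hP).congr fun m => tsum_congr fun q => ?_
  by_cases hq : absQ q = 0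
  · simp [hq]
  · have hr := ZpSub.one_le_of_ne_zero habsQ hq
    rw [if_neg hq, if_neg hq, if_neg hq, approxKernel_rpow_mul hp (by linarith) hb]
    congr 3
    field_simp
end
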